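/- Let Δ' ⊂ ℝ³ be the convex hull of the five points (−1,−1,−1), (5,−1,−1), (1,3,−1), (−1,3,−1), (−1,−1,1). Then Δ' contains the origin in its interior and its polar dual (Δ')* equals the convex hull of the five integer points (0,1,0), (−1,−1,−3), (0,−1,−2), (1,0,0), (0,0,1); in particular Δ' is a reflexive polytope. -/

import Mathlib

/-!
The origin is interior to the simplex on the vertices `(-1,-1,-1), (5,-1,-1), (-1,3,-1),
(-1,-1,1)` of `Δ'`: the barycentric coordinates `(1 - 2x - 3y - 6z)/12, (x + 1)/6, (y + 1)/4,
(z + 1)/2` of `(x, y, z)` are positive near `0`. The polar of a convex hull is the polar of its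
vertex set, so `(Δ')*` is cut out by five linear inequalities. The plane `y₀ = 0` splits this
polyhedron into two simplices with vertices among the five listed points, and the barycentric
coordinates in each are nonnegative combinations of the five inequalities.
-/

open Matrix

section Polar

variable {ι : Type*} [Fintype ι]

def polarDual (S : Set (ι → ℝ)) : Set (ι → ℝ) :=
  {y | ∀ x ∈ S, -1 ≤ ∑ i, y i * x i}

theorem convex_polarDual (S : Set (ι → ℝ)) : Convex ℝ (polarDual S) := by
  have : polarDual S = ⋂ x ∈ S, {y : ι → ℝ | -1 ≤ y ⬝ᵥ x} := by
    ext y; simp [polarDual, dotProduct]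
  rw [this]
  exact convex_iInter₂ fun x _ =>
    convex_halfSpace_ge ⟨fun u v => add_dotProduct u v x, fun c u => smul_dotProduct c u x⟩ _

theorem polarDual_convexHull (S : Set (ι → ℝ)) :
    polarDual (convexHull ℝ S) = polarDual S := by
  refine Set.Subset.antisymm (fun y hy x hx => hy x (subset_convexHull ℝ S hx)) ?_
  intro y hy x hx
  have hhalf : Convex ℝ {x : ι → ℝ | -1 ≤ y ⬝ᵥ x} :=
    convex_halfSpace_ge ⟨fun u v => dotProduct_add y u v, fun c u => dotProduct_smul c y u⟩ _
  exact convexHull_min hy hhalf hx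

end Polar

theorem Convex.add_smul_four_mem {R E : Type*} [Field R] [LinearOrder R] [IsStrictOrderedRing R]
    [AddCommGroup E] [Module R E] {s : Set E} (hs : Convex R s) {p₁ p₂ p₃ p₄ : E}
    (h₁ : p₁ ∈ s) (h₂ : p₂ ∈ s) (h₃ : p₃ ∈ s) (h₄ : p₄ ∈ s) {a b c d : R}
    (ha : 0 ≤ a) (hb : 0 ≤ b) (hc : 0 ≤ c) (hd : 0 ≤ d) (habcd : a + b + c + d = 1) :
    a • p₁ + b • p₂ + c • p₃ + d • p₄ ∈ s := by
  have h := hs.sum_mem (t := Finset.univ) (w := ![a, b, c, d]) (z := ![p₁, p₂, p₃, p₄])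
    (by simp [Fin.forall_fin_succ, *]) (by simp [Fin.sum_univ_four, habcd])
    (by simp [Fin.forall_fin_succ, *])
  simpa [Fin.sum_univ_four, add_assoc] using h

def deltaVertices : Set (Fin 3 → ℝ) :=
  {![-1,-1,-1], ![5,-1,-1], ![1,3,-1], ![-1,3,-1], ![-1,-1,1]}

def deltaPolarVertices : Set (Fin 3 → ℝ) :=
  {![0,1,0], ![-1,-1,-3], ![0,-1,-2], ![1,0,0], ![0,0,1]}

theorem ball_subset_convexHull_deltaVertices :
    Metric.ball 0 (1 / 12) ⊆ convexHull ℝ deltaVertices := by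
  intro p hp
  rw [mem_ball_zero_iff] at hp
  have hcoord (i : Fin 3) : -(1 / 12) < p i ∧ p i < 1 / 12 :=
    abs_lt.mp ((norm_le_pi_norm p i).trans_lt hp)
  obtain ⟨h₀, h₀'⟩ := hcoord 0
  obtain ⟨h₁, h₁'⟩ := hcoord 1
  obtain ⟨h₂, h₂'⟩ := hcoord 2
  have hp : p = ((1 - 2 * p 0 - 3 * p 1 - 6 * p 2) / 12) • ![-1,-1,-1]
      + ((p 0 + 1) / 6) • ![5,-1,-1] + ((p 1 + 1) / 4) • ![-1,3,-1]
      + ((p 2 + 1) / 2) • ![-1,-1,1] := by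
    ext i; fin_cases i <;> simp <;> ring
  rw [hp]
  refine (convex_convexHull ℝ _).add_smul_four_mem ?_ ?_ ?_ ?_
    (by linarith) (by linarith) (by linarith) (by linarith) (by ring) <;>
  exact subset_convexHull ℝ _ (by simp [deltaVertices])

theorem mem_polarDual_deltaVertices {y : Fin 3 → ℝ} :
    y ∈ polarDual deltaVertices ↔
      y 0 + y 1 + y 2 ≤ 1 ∧ -5 * y 0 + y 1 + y 2 ≤ 1 ∧ -y 0 - 3 * y 1 + y 2 ≤ 1 ∧
        y 0 - 3 * y 1 + y 2 ≤ 1 ∧ y 0 + y 1 - y 2 ≤ 1 := by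
  simp [polarDual, deltaVertices, Fin.sum_univ_three]
  grind

theorem polarDual_deltaVertices_subset :
    polarDual deltaVertices ⊆ convexHull ℝ deltaPolarVertices := by
  intro y hy
  obtain ⟨h₁, h₂, h₃, h₄, h₅⟩ := mem_polarDual_deltaVertices.mp hy
  rcases le_total (y 0) 0 with hy₀ | hy₀
  · have hy : y = ((y 0 + 3 * y 1 - y 2 + 1) / 4) • ![0,1,0] + (-y 0) • ![-1,-1,-3]
        + ((5 * y 0 - y 1 - y 2 + 1) / 4) • ![0,-1,-2]
        + ((1 - y 0 - y 1 + y 2) / 2) • ![0,0,1] := by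
      ext i; fin_cases i <;> simp <;> ring
    rw [hy]
    refine (convex_convexHull ℝ _).add_smul_four_mem ?_ ?_ ?_ ?_
      (by linarith) (by linarith) (by linarith) (by linarith) (by ring) <;>
    exact subset_convexHull ℝ _ (by simp [deltaPolarVertices])
  · have hy : y = ((-y 0 + 3 * y 1 - y 2 + 1) / 4) • ![0,1,0]
        + ((1 - y 0 - y 1 - y 2) / 4) • ![0,-1,-2] + y 0 • ![1,0,0]
        + ((1 - y 0 - y 1 + y 2) / 2) • ![0,0,1] := by
      ext i; fin_cases i <;> simp <;> ring
    rw [hy]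
    refine (convex_convexHull ℝ _).add_smul_four_mem ?_ ?_ ?_ ?_
      (by linarith) (by linarith) (by linarith) (by linarith) (by ring) <;>
    exact subset_convexHull ℝ _ (by simp [deltaPolarVertices])

theorem deltaPolarVertices_subset_polarDual :
    deltaPolarVertices ⊆ polarDual deltaVertices := by
  rintro w (rfl | rfl | rfl | rfl | rfl) <;>
    rw [mem_polarDual_deltaVertices] <;> norm_num [cons_val_two]

theorem polarDual_deltaVertices :
    polarDual deltaVertices = convexHull ℝ deltaPolarVertices :=
  (polarDual_deltaVertices_subset).antisymm
    (convexHull_min deltaPolarVertices_subset_polarDual (convex_polarDual _))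

/-- The polytope Δ' contains the origin in its interior and its polar dual
is the convex hull of the listed integer points; in particular Δ' is reflexive. -/
theorem stmt_15 :
    let Δ' : Set (Fin 3 → ℝ) := convexHull ℝ ({![-1,-1,-1], ![5,-1,-1], ![1,3,-1], ![-1,3,-1], ![-1,-1,1]} : Set (Fin 3 → ℝ))
    (0 : Fin 3 → ℝ) ∈ interior Δ' ∧
    {y : Fin 3 → ℝ | ∀ x ∈ Δ', -1 ≤ ∑ i, y i * x i} =
      convexHull ℝ ({![0,1,0], ![-1,-1,-3], ![0,-1,-2], ![1,0,0], ![0,0,1]} : Set (Fin 3 → ℝ)) :=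
  ⟨mem_interior.mpr ⟨_, ball_subset_convexHull_deltaVertices, Metric.isOpen_ball,
      Metric.mem_ball_self (by norm_num)⟩,
    (polarDual_convexHull deltaVertices).trans polarDual_deltaVertices⟩
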